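/- arXiv:1804.09485 — 10 statements merged into one kernel-verified Lean document; each statement's English description precedes it below -/
import Mathlib

section
/- For any odd prime p, the double sum over i and j from 0 to p-1 of S(i,j) is congruent to the Legendre symbol (p/3) modulo p. -/
open Finset

/-- The super Catalan numbers `S(m,n) = C(2m,m)·C(2n,n)/C(m+n,m)` (the division is exact). -/
def superCatalan (m n : ℕ) : ℕ :=
  (Nat.choose (2 * m) m * Nat.choose (2 * n) n) / Nat.choose (m + n) m

/-!
The super Catalan numbers satisfy `4 S(m,n) = S(m+1,n) + S(m,n+1)` (over `ℚ` this is a one-line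
factorial computation, and it also shows by induction on `m` that `S(m,n)` is an integer).
Summing the recurrence over the square `[0,p)²` telescopes: twice the double sum plus the
boundary sums on the axes equals the boundary sums on the edges `m = p` and `n = p`.
Modulo `p` we have `S(0,n) = C(2n,n)` and, by Lucas, `S(p,n) ≡ 2 C(2n,n)` for `n < p`, so the double
sum is `≡ ∑_{k<p} C(2k,k)`. With `p = 2h+1`, `h ≡ -1/2`, so `C(2k,k) ≡ (-4)^k C(h,k)` and the sum
is `(1-4)^h = (-3)^h ≡ (-3/p) = (p/3)` by Euler's criterion and quadratic reciprocity.
-/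

open Nat

def superCatalanRat (m n : ℕ) : ℚ := (2 * m)! * (2 * n)! / (m ! * n ! * (m + n)!)

lemma superCatalanRat_comm (m n : ℕ) : superCatalanRat m n = superCatalanRat n m := by
  rw [superCatalanRat, superCatalanRat, add_comm m n]
  ring

lemma superCatalanRat_pos (m n : ℕ) : 0 < superCatalanRat m n := by
  unfold superCatalanRat
  positivity

lemma superCatalanRat_zero_left (n : ℕ) : superCatalanRat 0 n = centralBinom n := by
  rw [superCatalanRat, centralBinom_eq_two_mul_choose, cast_choose ℚ (by omega : n ≤ 2 * n),
    show 2 * n - n = n by omega]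
  simp

lemma superCatalanRat_succ_left_mul (m n : ℕ) :
    superCatalanRat (m + 1) n * (m + n + 1) = 2 * (2 * m + 1) * superCatalanRat m n := by
  rw [superCatalanRat, superCatalanRat, show 2 * (m + 1) = 2 * m + 1 + 1 by ring,
    show m + 1 + n = m + n + 1 by ring]
  simp only [factorial_succ]
  push_cast
  field_simp
  ring

lemma superCatalanRat_succ_left_add_succ_right (m n : ℕ) :
    superCatalanRat (m + 1) n + superCatalanRat m (n + 1) = 4 * superCatalanRat m n := by
  have hm := superCatalanRat_succ_left_mul m n
  have hn := superCatalanRat_succ_left_mul n m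
  rw [superCatalanRat_comm (n + 1), superCatalanRat_comm n, add_comm (n : ℚ)] at hn
  refine mul_right_cancel₀ (by positivity : (m + n + 1 : ℚ) ≠ 0) ?_
  linear_combination hm + hn

lemma superCatalanRat_mul_choose (m n : ℕ) :
    superCatalanRat m n * (m + n).choose m = centralBinom m * centralBinom n := by
  rw [superCatalanRat, centralBinom_eq_two_mul_choose, centralBinom_eq_two_mul_choose,
    cast_choose ℚ (by omega : m ≤ 2 * m), cast_choose ℚ (by omega : n ≤ 2 * n),
    cast_choose ℚ (by omega : m ≤ m + n), show 2 * m - m = m by omega,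
    show 2 * n - n = n by omega, show m + n - m = n by omega]
  field_simp

lemma exists_natCast_eq_superCatalanRat (m n : ℕ) : ∃ N : ℕ, (N : ℚ) = superCatalanRat m n := by
  induction m generalizing n with
  | zero => exact ⟨_, (superCatalanRat_zero_left n).symm⟩
  | succ m ih =>
    obtain ⟨a, ha⟩ := ih n
    obtain ⟨b, hb⟩ := ih (n + 1)
    have hab : ((4 * a - b : ℤ) : ℚ) = superCatalanRat (m + 1) n := by
      push_cast
      linear_combination 4 * ha - hb - superCatalanRat_succ_left_add_succ_right m n
    have hnonneg : 0 ≤ 4 * (a : ℤ) - b := by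
      exact_mod_cast (hab ▸ superCatalanRat_pos (m + 1) n).le
    exact ⟨(4 * a - b : ℤ).toNat, by rw [← hab]; exact_mod_cast Int.toNat_of_nonneg hnonneg⟩

lemma cast_superCatalan (m n : ℕ) : (superCatalan m n : ℚ) = superCatalanRat m n := by
  obtain ⟨N, hN⟩ := exists_natCast_eq_superCatalanRat m n
  have h : N * (m + n).choose m = centralBinom m * centralBinom n := by
    exact_mod_cast hN ▸ superCatalanRat_mul_choose m n
  rw [superCatalan, ← centralBinom_eq_two_mul_choose, ← centralBinom_eq_two_mul_choose, ← h,
    Nat.mul_div_cancel _ (choose_pos (by omega)), hN]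

lemma superCatalan_mul_choose (m n : ℕ) :
    superCatalan m n * (m + n).choose m = centralBinom m * centralBinom n := by
  exact_mod_cast (cast_superCatalan m n).symm ▸ superCatalanRat_mul_choose m n

lemma superCatalan_comm (m n : ℕ) : superCatalan m n = superCatalan n m := by
  exact_mod_cast (cast_superCatalan m n).trans
    ((superCatalanRat_comm m n).trans (cast_superCatalan n m).symm)

lemma superCatalan_zero_left (n : ℕ) : superCatalan 0 n = centralBinom n := by
  exact_mod_cast (cast_superCatalan 0 n).trans (superCatalanRat_zero_left n)

lemma superCatalan_succ_left_add_succ_right (m n : ℕ) :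
    superCatalan (m + 1) n + superCatalan m (n + 1) = 4 * superCatalan m n := by
  have h := superCatalanRat_succ_left_add_succ_right m n
  simp only [← cast_superCatalan] at h
  exact_mod_cast h

theorem two_nsmul_sum_range_range_add_of_four_nsmul_eq {M : Type*} [AddCommGroup M]
    (f : ℕ → ℕ → M) (hf : ∀ m n, f (m + 1) n + f m (n + 1) = 4 • f m n) (N : ℕ) :
    2 • ∑ i ∈ range N, ∑ j ∈ range N, f i j + (∑ j ∈ range N, f 0 j + ∑ i ∈ range N, f i 0) =
      ∑ j ∈ range N, f N j + ∑ i ∈ range N, f i N := by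
  have shift (g : ℕ → M) : ∑ i ∈ range N, g (i + 1) + g 0 = ∑ i ∈ range N, g i + g N :=
    (sum_range_succ' g N).symm.trans (sum_range_succ g N)
  set T := ∑ i ∈ range N, ∑ j ∈ range N, f i j
  have hT : 4 • T = ∑ j ∈ range N, ∑ i ∈ range N, f (i + 1) j +
      ∑ i ∈ range N, ∑ j ∈ range N, f i (j + 1) := by
    simp only [T, smul_sum, ← hf, sum_add_distrib]
    rw [sum_comm]
  have hm : ∑ j ∈ range N, ∑ i ∈ range N, f (i + 1) j + ∑ j ∈ range N, f 0 j =
      T + ∑ j ∈ range N, f N j := by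
    rw [← sum_add_distrib, sum_congr rfl fun j _ => shift (f · j), sum_add_distrib, sum_comm]
  have hn : ∑ i ∈ range N, ∑ j ∈ range N, f i (j + 1) + ∑ i ∈ range N, f i 0 =
      T + ∑ i ∈ range N, f i N := by
    rw [← sum_add_distrib, ← sum_add_distrib]
    exact sum_congr rfl fun i _ => shift (f i)
  linear_combination (norm := abel) hm + hn + hT

section ZModPrime

variable {p : ℕ} [Fact p.Prime]

theorem cast_choose_add_self_left {n : ℕ} (hn : n < p) : ((p + n).choose n : ZMod p) = 1 := by
  have h := Choose.choose_modEq_choose_mod_mul_choose_div_nat (n := p + n) (k := n) (p := p)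
  rw [← ZMod.natCast_eq_natCast_iff] at h
  rw [h, add_comm, Nat.add_mod_right, Nat.add_div_right _ (Fact.out : p.Prime).pos,
    Nat.mod_eq_of_lt hn, Nat.div_eq_of_lt hn]
  simp

theorem cast_centralBinom_self : (centralBinom p : ZMod p) = 2 := by
  have h := Choose.choose_modEq_choose_mod_mul_choose_div_nat (n := 2 * p) (k := p) (p := p)
  rw [← ZMod.natCast_eq_natCast_iff] at h
  have hp := (Fact.out : p.Prime).pos
  rw [centralBinom_eq_two_mul_choose, h]
  simp [Nat.div_self hp, Nat.mul_div_cancel _ hp]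

theorem cast_superCatalan_self_left {n : ℕ} (hn : n < p) :
    (superCatalan p n : ZMod p) = 2 * centralBinom n := by
  have h := congrArg (Nat.cast : ℕ → ZMod p) (superCatalan_mul_choose p n)
  push_cast at h
  rwa [choose_symm_add, cast_choose_add_self_left hn, mul_one, cast_centralBinom_self] at h

theorem cast_centralBinom_eq_neg_four_pow_mul_choose {h k : ℕ} (hph : p = 2 * h + 1)
    (hk : k ≤ h) : (centralBinom k : ZMod p) = (-4) ^ k * h.choose k := by
  induction k with
  | zero => simp
  | succ k ih =>
    have hk0 : ((k + 1 : ℕ) : ZMod p) ≠ 0 := by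
      rw [Ne, ZMod.natCast_eq_zero_iff]
      exact fun hdvd => by have := Nat.le_of_dvd (by omega) hdvd; omega
    have hcb : ((k + 1 : ℕ) * centralBinom (k + 1) : ZMod p) =
        2 * (2 * k + 1) * centralBinom k := by
      exact_mod_cast congrArg (Nat.cast : ℕ → ZMod p) (succ_mul_centralBinom_succ k)
    have hch : (h.choose (k + 1) * (k + 1 : ℕ) : ZMod p) = h.choose k * (h - k : ℕ) := by
      exact_mod_cast congrArg (Nat.cast : ℕ → ZMod p) (choose_succ_right_eq h k)
    have hp0 : (2 * h + 1 : ZMod p) = 0 := by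
      exact_mod_cast (congrArg (Nat.cast : ℕ → ZMod p) hph).symm.trans (ZMod.natCast_self p)
    rw [Nat.cast_sub (by omega : k ≤ h)] at hch
    refine mul_left_cancel₀ hk0 ?_
    rw [hcb, ih (by omega)]
    push_cast at hch ⊢
    linear_combination (-4) ^ k * (4 * hch + 2 * h.choose k * hp0)

theorem cast_centralBinom_eq_zero {k : ℕ} (hk : p < 2 * k) (hkp : k < p) :
    (centralBinom k : ZMod p) = 0 := by
  rw [ZMod.natCast_eq_zero_iff, centralBinom_eq_two_mul_choose, two_mul]
  exact (Fact.out : p.Prime).dvd_choose_add hkp hkp (by omega)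

theorem sum_range_cast_centralBinom {h : ℕ} (hph : p = 2 * h + 1) :
    ∑ k ∈ range p, (centralBinom k : ZMod p) = (-3) ^ h := by
  have hsub : range (h + 1) ⊆ range p := range_subset_range.mpr (by omega)
  rw [← sum_subset hsub fun k hk hk' => by
    simp only [mem_range] at hk hk'
    exact cast_centralBinom_eq_zero (by omega) hk]
  rw [show (-3 : ZMod p) = -4 + 1 by norm_num, add_pow]
  refine sum_congr rfl fun k hk => ?_
  rw [cast_centralBinom_eq_neg_four_pow_mul_choose hph (by simpa [Nat.lt_succ_iff] using hk)]
  simp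

theorem legendreSym_neg_three (hp : p ≠ 2) : legendreSym p (-3) = legendreSym 3 p := by
  have hodd : p % 2 = 1 := Nat.odd_iff.mp ((Fact.out : p.Prime).odd_of_ne_two hp)
  rw [show (-3 : ℤ) = -1 * 3 by norm_num, legendreSym.mul, legendreSym.at_neg_one hp,
    ZMod.χ₄_eq_neg_one_pow hodd, legendreSym.quadratic_reciprocity' hp (by decide)]
  norm_num

end ZModPrime

theorem stmt0 (p : ℕ) (hp : p.Prime) (hodd : Odd p) :
    (↑(∑ i ∈ Finset.range p, ∑ j ∈ Finset.range p, superCatalan i j) : ZMod p) =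
      (legendreSym 3 p : ZMod p) := by
  have := Fact.mk hp
  have hp2 : p ≠ 2 := by rintro rfl; exact (by decide : ¬Odd 2) hodd
  have htel := two_nsmul_sum_range_range_add_of_four_nsmul_eq
    (fun i j => (superCatalan i j : ZMod p)) (fun m n => by
      rw [nsmul_eq_mul]
      exact_mod_cast congrArg (Nat.cast : ℕ → ZMod p) (superCatalan_succ_left_add_succ_right m n)) p
  simp only [superCatalan_zero_left, superCatalan_comm _ 0, superCatalan_comm _ p,
    sum_congr rfl fun j hj => cast_superCatalan_self_left (mem_range.mp hj), ← mul_sum,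
    nsmul_eq_mul] at htel
  rw [← legendreSym_neg_three hp2, legendreSym.eq_pow, Int.cast_neg, Int.cast_ofNat,
    ← sum_range_cast_centralBinom (Nat.two_mul_div_two_add_one_of_odd hodd).symm, cast_sum]
  refine mul_left_cancel₀ (Ring.two_ne_zero (by rwa [ZMod.ringChar_zmod_n])) ?_
  push_cast at htel ⊢
  linear_combination htel
end

section
/- For any non-negative integer n, the double sum over i,j from 0 to n of (-4)^(i+j) * C(n,i)*C(n,j)/C(i+j,i) equals (-3)^n*(2n-1)/(4(n+1)) + (4^n/C(2n,n)) * (1/2 - sum over k from 0 to n of C_k*(-3/4)^(k+1)), where C_k is the k-th Catalan number. -/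
/-!
Both sides satisfy `(2n+1) a(n+1) = (2n+2) a(n) - (4n+1) (-3)^n` and equal `1` at `n = 0`.
For the right side this is the ratio of consecutive central binomial coefficients together with
`(n+2) C_{n+1} = binom(2n+2, n+1)`. For the double sum, with summand `F n i j`, a two-variable
creative-telescoping certificate writes `6(n+1)((2n+1) F (n+1) i j - (2n+2) F n i j)` as an
`i`-difference plus a `j`-difference; summed over the square these telescope to binomial sums
along the edges `i = 0` and `j = 0`, which are evaluated by the binomial theorem and absorption.
-/

open Finset

section Binomial

variable {R : Type*} [CommRing R]

theorem Nat.cast_choose_succ_mul (m k : ℕ) :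
    (m.choose (k + 1) : R) * (k + 1) = m.choose k * (m - k) := by
  rcases le_or_gt k m with hk | hk
  · have := congrArg (Nat.cast (R := R)) (Nat.choose_succ_right_eq m k)
    push_cast [Nat.cast_sub hk] at this
    exact this
  · simp [Nat.choose_eq_zero_of_lt hk, Nat.choose_eq_zero_of_lt (hk.trans (Nat.lt_succ_self k))]

theorem Nat.cast_choose_mul_succ (n k : ℕ) :
    (n.choose k : R) * (n + 1) = (n + 1).choose k * (n + 1 - k) := by
  rcases le_or_gt k (n + 1) with hk | hk
  · have := congrArg (Nat.cast (R := R)) (Nat.choose_mul_succ_eq n k)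
    push_cast [Nat.cast_sub hk] at this
    exact this
  · simp [Nat.choose_eq_zero_of_lt hk, Nat.choose_eq_zero_of_lt (Nat.lt_of_succ_lt hk)]

theorem Finset.sum_range_choose_mul_pow (m : ℕ) (x : R) :
    ∑ j ∈ range (m + 1), (m.choose j : R) * x ^ j = (1 + x) ^ m := by
  simpa [mul_comm, add_comm] using (add_pow x 1 m).symm

theorem Finset.sum_range_mul_choose_succ (m : ℕ) (f : ℕ → R) :
    ∑ j ∈ range (m + 2), (j : R) * (m + 1).choose j * f j =
      (m + 1) * ∑ j ∈ range (m + 1), (m.choose j : R) * f (j + 1) := by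
  rw [sum_range_succ', mul_sum]
  simp only [Nat.cast_zero, zero_mul, add_zero]
  refine sum_congr rfl fun j _ => ?_
  have := congrArg (Nat.cast (R := R)) (Nat.add_one_mul_choose_eq m j)
  push_cast at this ⊢
  linear_combination (-f (j + 1)) * this

theorem Finset.one_add_mul_sum_range_mul_choose_mul_pow (m : ℕ) (x : R) :
    (1 + x) * ∑ j ∈ range (m + 1), (j : R) * m.choose j * x ^ j = m * x * (1 + x) ^ m := by
  cases m with
  | zero => simp
  | succ m =>
    have h := sum_range_choose_mul_pow m x
    rw [sum_range_mul_choose_succ]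
    simp only [pow_succ, ← mul_assoc, ← sum_mul] at h ⊢
    rw [h]
    push_cast
    ring

theorem Finset.one_add_sq_mul_sum_range_sq_mul_choose_mul_pow (m : ℕ) (x : R) :
    (1 + x) ^ 2 * ∑ j ∈ range (m + 1), (j : R) ^ 2 * m.choose j * x ^ j =
      m * x * (1 + x) ^ m * (1 + m * x) := by
  cases m with
  | zero => simp
  | succ m =>
    have h0 := sum_range_choose_mul_pow m x
    have h1 := one_add_mul_sum_range_mul_choose_mul_pow m x
    have hsplit : ∑ j ∈ range (m + 2), (j : R) ^ 2 * (m + 1).choose j * x ^ j =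
        (m + 1) * x * (∑ j ∈ range (m + 1), (j : R) * m.choose j * x ^ j +
          ∑ j ∈ range (m + 1), (m.choose j : R) * x ^ j) := by
      calc ∑ j ∈ range (m + 2), (j : R) ^ 2 * (m + 1).choose j * x ^ j
          = ∑ j ∈ range (m + 2), (j : R) * (m + 1).choose j * (j * x ^ j) :=
            sum_congr rfl fun j _ => by ring
        _ = _ := by
          rw [sum_range_mul_choose_succ, ← sum_add_distrib, mul_sum, mul_sum]
          refine sum_congr rfl fun j _ => ?_
          push_cast
          ring
    rw [Nat.cast_add_one, hsplit, h0]
    linear_combination (m + 1) * x * (1 + x) * h1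

end Binomial

theorem Finset.sum_sum_range_sub_add_sub {M : Type*} [AddCommGroup M] (g h : ℕ → ℕ → M) (N : ℕ) :
    ∑ i ∈ range N, ∑ j ∈ range N, ((g (i + 1) j - g i j) + (h i (j + 1) - h i j)) =
      ∑ j ∈ range N, (g N j - g 0 j) + ∑ i ∈ range N, (h i N - h i 0) := by
  simp only [sum_add_distrib]
  rw [sum_comm]
  simp only [sum_range_sub (h _)]
  exact congrArg (· + _) (sum_congr rfl fun j _ => sum_range_sub (g · j) N)

def summand (n i j : ℕ) : ℚ :=
  (-4 : ℚ) ^ (i + j) * (Nat.choose n i * Nat.choose n j) / Nat.choose (i + j) i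

def doubleSum (n : ℕ) : ℚ :=
  ∑ i ∈ range (n + 1), ∑ j ∈ range (n + 1), summand n i j

def closedForm (n : ℕ) : ℚ :=
  (-3 : ℚ) ^ n * (2 * n - 1) / (4 * (n + 1)) +
    (4 : ℚ) ^ n / Nat.choose (2 * n) n *
      (1 / 2 - ∑ k ∈ range (n + 1), (catalan k : ℚ) * (-3 / 4) ^ (k + 1))

theorem summand_comm (n i j : ℕ) : summand n i j = summand n j i := by
  rw [summand, summand, add_comm j, Nat.choose_symm_add, mul_comm (n.choose i : ℚ)]

theorem summand_zero_left (n j : ℕ) : summand n 0 j = (n.choose j : ℚ) * (-4) ^ j := by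
  simp [summand, mul_comm]

theorem summand_of_lt_left {n i : ℕ} (h : n < i) (j : ℕ) : summand n i j = 0 := by
  simp [summand, Nat.choose_eq_zero_of_lt h]

theorem summand_succ_left (n i j : ℕ) :
    (i + j + 1) * summand n (i + 1) j = -4 * (n - i) * summand n i j := by
  have hn := Nat.cast_choose_succ_mul (R := ℚ) n i
  have hd := congrArg (Nat.cast (R := ℚ)) (Nat.add_one_mul_choose_eq (i + j) i)
  have hd0 : ((i + j).choose i : ℚ) ≠ 0 :=
    Nat.cast_ne_zero.2 (Nat.choose_pos (Nat.le_add_right i j)).ne'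
  have hd1 : ((i + j + 1).choose (i + 1) : ℚ) ≠ 0 :=
    Nat.cast_ne_zero.2 (Nat.choose_pos (by omega)).ne'
  simp only [summand]
  rw [show i + 1 + j = i + j + 1 by ring]
  push_cast at hd
  rw [← mul_div_assoc, ← mul_div_assoc, div_eq_div_iff hd1 hd0]
  linear_combination (-4 : ℚ) ^ (i + j + 1) * n.choose j *
    (n.choose (i + 1) * hd + (i + j + 1).choose (i + 1) * hn)

theorem summand_succ_right (n i j : ℕ) :
    (i + j + 1) * summand n i (j + 1) = -4 * (n - j) * summand n i j := by
  rw [summand_comm, summand_comm n i, ← summand_succ_left]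
  ring

theorem summand_of_succ (n i j : ℕ) :
    (n + 1) ^ 2 * summand n i j = (n + 1 - i) * (n + 1 - j) * summand (n + 1) i j := by
  have hi := Nat.cast_choose_mul_succ (R := ℚ) n i
  have hj := Nat.cast_choose_mul_succ (R := ℚ) n j
  simp only [summand]
  linear_combination (-4 : ℚ) ^ (i + j) / (i + j).choose i *
    ((n + 1) * n.choose j * hi + (n + 1).choose i * (n + 1 - i) * hj)

-- The creative-telescoping certificate for `summand (n + 1)`.
def wzA (n i j : ℕ) : ℚ :=
  (n + 1) * (4 * n + 3) + (2 * n + 3) * j - 6 * j ^ 2 + 4 * (n + 1) * i - 4 * i * j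

def wzB (n j : ℕ) : ℚ :=
  -((n + 1) * (4 * n + 1)) - 3 * (2 * n + 1) * j - 2 * j ^ 2

theorem wz_certificate (n i j : ℕ) :
    6 * (n + 1) * ((2 * n + 1) * summand (n + 1) i j - (2 * n + 2) * summand n i j) =
      (wzA n (i + 1) j * summand (n + 1) (i + 1) j - wzA n i j * summand (n + 1) i j) +
        (wzB n (j + 1) * summand (n + 1) i (j + 1) - wzB n j * summand (n + 1) i j) := by
  have hi := summand_succ_left (n + 1) i j
  have hj := summand_succ_right (n + 1) i j
  have hn := summand_of_succ n i j
  have hne : ((i : ℚ) + j + 1) * (n + 1) ≠ 0 := by positivity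
  refine mul_left_cancel₀ hne ?_
  -- once the denominators are cleared, every term is a multiple of `summand (n + 1) i j`
  push_cast at hi hj
  linear_combination (norm := skip) -12 * ((i : ℚ) + j + 1) * (n + 1) * hn
    - (n + 1) * wzA n (i + 1) j * hi - (n + 1) * wzB n (j + 1) * hj
  simp only [wzA, wzB]
  push_cast
  ring

theorem wz_boundary (n : ℕ) :
    ∑ j ∈ range (n + 2), wzA n 0 j * summand (n + 1) 0 j +
        ∑ i ∈ range (n + 2), wzB n 0 * summand (n + 1) i 0 =
      6 * (n + 1) * (4 * n + 1) * (-3) ^ n := by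
  have h0 := sum_range_choose_mul_pow (n + 1) (-4 : ℚ)
  have h1 := one_add_mul_sum_range_mul_choose_mul_pow (n + 1) (-4 : ℚ)
  have h2 := one_add_sq_mul_sum_range_sq_mul_choose_mul_pow (n + 1) (-4 : ℚ)
  have hsplit : ∑ j ∈ range (n + 2), wzA n 0 j * summand (n + 1) 0 j +
        ∑ i ∈ range (n + 2), wzB n 0 * summand (n + 1) i 0 =
      2 * (n + 1) * ∑ j ∈ range (n + 2), ((n + 1).choose j : ℚ) * (-4) ^ j +
        (2 * n + 3) * ∑ j ∈ range (n + 2), (j : ℚ) * (n + 1).choose j * (-4) ^ j -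
        6 * ∑ j ∈ range (n + 2), (j : ℚ) ^ 2 * (n + 1).choose j * (-4) ^ j := by
    simp only [summand_comm (n + 1) _ 0, summand_zero_left, mul_sum, ← sum_add_distrib,
      ← sum_sub_distrib]
    refine sum_congr rfl fun j _ => ?_
    simp only [wzA, wzB]
    push_cast
    ring
  rw [hsplit, h0]
  push_cast at h1 h2
  linear_combination (-1/3 : ℚ) * (2 * n + 3) * h1 + (-2/3 : ℚ) * h2

theorem sum_sum_range_succ_summand (n : ℕ) :
    ∑ i ∈ range (n + 2), ∑ j ∈ range (n + 2), summand n i j = doubleSum n := by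
  have hz : ∀ k, summand n (n + 1) k = 0 := summand_of_lt_left (Nat.lt_succ_self n)
  rw [sum_range_succ, sum_eq_zero fun j _ => hz j, add_zero]
  refine sum_congr rfl fun i _ => ?_
  rw [sum_range_succ, summand_comm, hz, add_zero]

theorem doubleSum_succ (n : ℕ) :
    (2 * n + 1) * doubleSum (n + 1) = (2 * n + 2) * doubleSum n - (4 * n + 1) * (-3) ^ n := by
  have hz : ∀ k, summand (n + 1) (n + 2) k = 0 := summand_of_lt_left (Nat.lt_succ_self _)
  have htel : ∑ i ∈ range (n + 2), ∑ j ∈ range (n + 2),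
      6 * (n + 1) * ((2 * n + 1) * summand (n + 1) i j - (2 * n + 2) * summand n i j) =
        -(6 * (n + 1) * (4 * n + 1) * (-3) ^ n) := by
    simp only [wz_certificate]
    rw [sum_sum_range_sub_add_sub (fun i j => wzA n i j * summand (n + 1) i j)
      (fun i j => wzB n j * summand (n + 1) i j), ← wz_boundary]
    simp only [hz, summand_comm (n + 1) _ (n + 2), mul_zero, zero_sub, sum_neg_distrib]
    ring
  simp only [← mul_sum, mul_sub, sum_sub_distrib, sum_sum_range_succ_summand] at htel
  have hne : (6 * ((n : ℚ) + 1)) ≠ 0 := by positivity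
  refine mul_left_cancel₀ hne ?_
  rw [doubleSum]
  linear_combination htel

theorem closedForm_succ (n : ℕ) :
    (2 * n + 1) * closedForm (n + 1) = (2 * n + 2) * closedForm n - (4 * n + 1) * (-3) ^ n := by
  have hcb : ((n + 1).centralBinom : ℚ) = 2 * (2 * n + 1) * n.centralBinom / (n + 1) := by
    rw [eq_div_iff (by positivity), mul_comm]
    exact_mod_cast Nat.succ_mul_centralBinom_succ n
  have hcat : (catalan (n + 1) : ℚ) = (n + 1).centralBinom / (n + 2) := by
    rw [eq_div_iff (by positivity), mul_comm]
    exact_mod_cast succ_mul_catalan_eq_centralBinom (n + 1)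
  have hc0 : (n.centralBinom : ℚ) ≠ 0 := Nat.cast_ne_zero.2 (Nat.centralBinom_ne_zero n)
  simp only [closedForm, ← Nat.centralBinom_eq_two_mul_choose, sum_range_succ _ (n + 1)]
  rw [hcat, hcb, div_pow (-3 : ℚ) 4 (n + 1 + 1)]
  push_cast
  field_simp
  ring

theorem stmt3 (n : ℕ) :
    ∑ i ∈ Finset.range (n + 1), ∑ j ∈ Finset.range (n + 1),
        (-4 : ℚ) ^ (i + j) * (Nat.choose n i * Nat.choose n j) / Nat.choose (i + j) i =
      (-3 : ℚ) ^ n * (2 * n - 1) / (4 * (n + 1)) +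
        (4 : ℚ) ^ n / Nat.choose (2 * n) n *
          (1 / 2 - ∑ k ∈ Finset.range (n + 1), (catalan k : ℚ) * (-3 / 4) ^ (k + 1)) := by
  change doubleSum n = closedForm n
  induction n with
  | zero => norm_num [doubleSum, closedForm, summand]
  | succ n ih =>
    refine mul_left_cancel₀ (by positivity : (2 * n + 1 : ℚ) ≠ 0) ?_
    rw [doubleSum_succ, closedForm_succ, ih]
end

section
/- Let p be an odd prime and q a power of p. Then sum over k from 0 to q-1 of C(2k,k)*x^k is congruent to (1-4x)^((q-1)/2) modulo p, as polynomials in x over Z/pZ. -/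
open Finset Polynomial

/-!
Write `u = (p - 1) / 2` and `S_n = ∑_{k<n} C(2k,k) Xᵏ`. Both `C(2k,k)` and `(-4)ᵏ C(u,k)` satisfy
`(k+1) c_{k+1} = 2(2k+1) c_k` in `ZMod p` (because `-4u = 2` there), so they agree for `k < p`,
which gives `S_p = (1 - 4X)ᵘ`. Lucas' theorem gives `C(2(a+pb), a+pb) ≡ C(2a,a) C(2b,b)` for
`a < p`, i.e. `S_{pn} = S_p · S_n(Xᵖ)`, and `S_n(Xᵖ) = S_nᵖ` by Frobenius. Since
`(p^{m+1} - 1) / 2 = u + p (p^m - 1) / 2`, induction on `m` finishes the proof.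
-/

theorem Finset.sum_range_mul_eq_sum_sum_add_mul {M : Type*} [AddCommMonoid M] (f : ℕ → M)
    (p n : ℕ) : ∑ k ∈ range (p * n), f k = ∑ a ∈ range p, ∑ b ∈ range n, f (a + p * b) := by
  induction n with
  | zero => simp
  | succ n ih =>
    simp only [Nat.mul_succ, sum_range_add, ih, sum_range_succ, sum_add_distrib]
    simp only [add_comm]

theorem ZMod.two_mul_half_pred_eq_neg_one {n : ℕ} (hn : Odd n) :
    2 * (((n - 1) / 2 : ℕ) : ZMod n) = -1 := by
  obtain ⟨k, rfl⟩ := hn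
  have h : ((2 * k + 1 : ℕ) : ZMod (2 * k + 1)) = 0 := ZMod.natCast_self _
  simp only [Nat.add_sub_cancel, Nat.mul_div_cancel_left k two_pos]
  push_cast at h
  linear_combination h

noncomputable def centralBinomPoly (R : Type*) [Semiring R] (n : ℕ) : R[X] :=
  ∑ k ∈ range n, C (k.centralBinom : R) * X ^ k

section

variable {p : ℕ} [Fact p.Prime]

theorem centralBinom_add_prime_mul {a : ℕ} (ha : a < p) (b : ℕ) :
    ((a + p * b).centralBinom : ZMod p) = a.centralBinom * b.centralBinom := by
  have hp : 0 < p := (Fact.out : p.Prime).pos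
  have lucas (n k : ℕ) :
      (n.choose k : ZMod p) = (n % p).choose (k % p) * (n / p).choose (k / p) :=
    mod_cast (ZMod.natCast_eq_natCast_iff _ _ _).mpr
      Choose.choose_modEq_choose_mod_mul_choose_div_nat
  have h2 : 2 * (a + p * b) = 2 * a + p * (2 * b) := by ring
  simp only [Nat.centralBinom_eq_two_mul_choose, h2, lucas (2 * a + p * (2 * b)), lucas (2 * a),
    Nat.add_mul_mod_self_left, Nat.add_mul_div_left _ _ hp, Nat.mod_eq_of_lt ha,
    Nat.div_eq_of_lt ha, Nat.choose_zero_right]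
  rcases lt_or_ge (2 * a) p with h2a | h2a
  · simp [Nat.div_eq_of_lt h2a]
  · -- a carry in `a + a` makes `(2a mod p).choose a` vanish
    rw [Nat.choose_eq_zero_of_lt (n := 2 * a % p)]
    · simp
    · rw [Nat.mod_eq_sub_mod h2a, Nat.mod_eq_of_lt (by omega)]; omega

theorem centralBinom_eq_neg_four_pow_mul_choose (hodd : Odd p) {k : ℕ} (hk : k < p) :
    (k.centralBinom : ZMod p) = (-4) ^ k * ((p - 1) / 2).choose k := by
  induction k with
  | zero => simp
  | succ k ih =>
    set u := (p - 1) / 2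
    have hk1 : ((k + 1 : ℕ) : ZMod p) ≠ 0 := by
      rw [Ne, ZMod.natCast_eq_zero_iff]
      exact fun h => absurd (Nat.le_of_dvd k.succ_pos h) (by omega)
    have hstep : (u.choose k : ZMod p) * (u - k : ℕ) * (-4) = 2 * (2 * k + 1) * u.choose k := by
      rcases le_or_gt k u with hku | hku
      · rw [Nat.cast_sub hku]
        linear_combination (-2 * (u.choose k : ZMod p)) * ZMod.two_mul_half_pred_eq_neg_one hodd
      · simp [Nat.choose_eq_zero_of_lt hku]
    apply mul_left_cancel₀ hk1
    calc ((k + 1 : ℕ) : ZMod p) * (k + 1).centralBinom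
        = 2 * (2 * k + 1) * k.centralBinom :=
          mod_cast congrArg (Nat.cast (R := ZMod p)) k.succ_mul_centralBinom_succ
      _ = (-4) ^ (k + 1) * (u.choose k * (u - k : ℕ)) := by
        rw [ih (by omega), pow_succ]; linear_combination (-4) ^ k * hstep.symm
      _ = ((k + 1 : ℕ) : ZMod p) * ((-4) ^ (k + 1) * u.choose (k + 1)) := by
        rw [← Nat.cast_mul, ← Nat.choose_succ_right_eq]; push_cast; ring

theorem centralBinomPoly_prime (hodd : Odd p) :
    centralBinomPoly (ZMod p) p = (1 - 4 * X) ^ ((p - 1) / 2) := by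
  have hsupp : range ((p - 1) / 2 + 1) ⊆ range p :=
    range_subset_range.mpr (by have := (Fact.out : p.Prime).pos; omega)
  have hvanish : ∀ k ∈ range p, k ∉ range ((p - 1) / 2 + 1) →
      (-(4 * X) : (ZMod p)[X]) ^ k * 1 ^ ((p - 1) / 2 - k) * ((p - 1) / 2).choose k = 0 :=
    fun k _ hk => by simp [Nat.choose_eq_zero_of_lt (by simpa using hk : (p - 1) / 2 < k)]
  rw [show (1 - 4 * X : (ZMod p)[X]) = -(4 * X) + 1 by ring, add_pow, sum_subset hsupp hvanish]
  refine sum_congr rfl fun k hk => ?_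
  rw [centralBinom_eq_neg_four_pow_mul_choose hodd (mem_range.mp hk)]
  simp only [map_mul, map_pow, map_neg, map_ofNat, map_natCast, one_pow, mul_one]
  ring

theorem centralBinomPoly_prime_mul (n : ℕ) :
    centralBinomPoly (ZMod p) (p * n) =
      centralBinomPoly (ZMod p) p * expand (ZMod p) p (centralBinomPoly (ZMod p) n) := by
  simp only [centralBinomPoly, sum_range_mul_eq_sum_sum_add_mul, map_sum, map_mul, expand_C,
    map_pow, expand_X, sum_mul_sum]
  refine sum_congr rfl fun a ha => sum_congr rfl fun b _ => ?_
  rw [centralBinom_add_prime_mul (mem_range.mp ha), map_mul, pow_add, pow_mul]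
  ring

theorem centralBinomPoly_prime_pow (hodd : Odd p) (m : ℕ) :
    centralBinomPoly (ZMod p) (p ^ m) = (1 - 4 * X) ^ ((p ^ m - 1) / 2) := by
  induction m with
  | zero => simp [centralBinomPoly]
  | succ m ih =>
    have hexp : (p ^ (m + 1) - 1) / 2 = (p - 1) / 2 + (p ^ m - 1) / 2 * p := by
      obtain ⟨y, hy⟩ := hodd.pow (n := m)
      obtain ⟨x, hx⟩ := hodd
      have h : (2 * y + 1) * (2 * x + 1) - 1 = 2 * (x + y * (2 * x + 1)) := by
        rw [Nat.sub_eq_of_eq_add]; ring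
      rw [pow_succ, hy, hx, h]
      simp
    rw [pow_succ', centralBinomPoly_prime_mul, ih, centralBinomPoly_prime hodd, ZMod.expand_card,
      ← pow_mul, ← pow_add, ← pow_succ', hexp]

end

theorem stmt5 (p q m : ℕ) (hp : p.Prime) (hodd : Odd p) (hq : q = p ^ m) :
    ∑ k ∈ Finset.range q, C ((Nat.choose (2 * k) k : ZMod p)) * X ^ k =
      (1 - 4 * X) ^ ((q - 1) / 2) := by
  have := Fact.mk hp
  subst hq
  exact centralBinomPoly_prime_pow hodd m
end

section
/- Let p be an odd prime and q a power of p. Then sum over k from 0 to q-1 of C_k*x^(k+1) is congruent to (1-(1-4x)^((q+1)/2))/2 - x^q modulo p, as polynomials over Z/pZ. -/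
/-!
Put `u = (1 - 4X) ^ ((q + 1) / 2)`. In characteristic `p` the Frobenius gives
`u ^ 2 = (1 - 4X) ^ (q + 1) = (1 - 4X) (1 - 4X ^ q)`, so `H = (1 - u) / 2 - X ^ q` solves the
Catalan equation `y = X + y ^ 2` modulo `X ^ (q + 1)`, exactly like the truncation
`∑_{k < q} C_k X ^ (k + 1)` of the Catalan generating function `X c(X)`. Solutions without
constant term are unique modulo `X ^ (q + 1)`, since the difference of two of them is multiplied
by `1 - (y + z)`, a unit there; as both polynomials have degree at most `q`, they are equal.
-/

open Finset Polynomial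

open scoped PowerSeries

section QuadraticUniqueness

variable {A : Type*} [CommRing A] {x a b y z : A} {n : ℕ}

theorem pow_dvd_of_pow_dvd_mul_one_sub (hb : x ∣ b) (h : x ^ n ∣ a * (1 - b)) : x ^ n ∣ a := by
  have hsplit : a = a * (1 - b) * ∑ i ∈ range n, b ^ i + a * b ^ n := by
    rw [mul_assoc, mul_neg_geom_sum]; ring
  rw [hsplit]
  exact dvd_add (dvd_mul_of_dvd_left h _) (dvd_mul_of_dvd_right (pow_dvd_pow_of_dvd hb n) _)

theorem pow_dvd_sub_of_pow_dvd_sub_sub_sq (hy : x ∣ y) (hz : x ∣ z)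
    (hy' : x ^ n ∣ y - x - y ^ 2) (hz' : x ^ n ∣ z - x - z ^ 2) : x ^ n ∣ y - z :=
  pow_dvd_of_pow_dvd_mul_one_sub (dvd_add hy hz) <| by
    convert dvd_sub hy' hz' using 1; ring

end QuadraticUniqueness

theorem ZMod.two_ne_zero_of_odd {p : ℕ} [Fact p.Prime] (hodd : Odd p) : (2 : ZMod p) ≠ 0 :=
  Ring.two_ne_zero <| by
    rw [ZMod.ringChar_zmod_n]; rintro rfl; exact Nat.not_odd_iff_even.mpr even_two hodd

namespace PowerSeries

variable (R : Type*) [CommRing R]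

noncomputable def catalanSeriesX : R⟦X⟧ := X * map (Nat.castRingHom R) catalanSeries

theorem catalanSeriesX_eq_X_add_sq : catalanSeriesX R = X + catalanSeriesX R ^ 2 := by
  have h := congrArg (map (Nat.castRingHom R)) catalanSeries_sq_mul_X_add_one
  simp only [map_add, map_mul, map_pow, map_one, map_X] at h
  unfold catalanSeriesX
  linear_combination (-X : R⟦X⟧) * h

end PowerSeries

namespace Polynomial

variable (R : Type*) [CommRing R]

noncomputable def catalanPoly (n : ℕ) : R[X] := ∑ k ∈ range n, C (catalan k : R) * X ^ (k + 1)

variable {R}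

theorem coeff_catalanPoly_zero (n : ℕ) : (catalanPoly R n).coeff 0 = 0 := by
  simp [catalanPoly]

theorem coeff_catalanPoly_succ (n d : ℕ) :
    (catalanPoly R n).coeff (d + 1) = if d < n then (catalan d : R) else 0 := by
  simp [catalanPoly]

theorem X_pow_succ_dvd_catalanPoly_sub_catalanSeriesX (n : ℕ) :
    PowerSeries.X ^ (n + 1) ∣ (catalanPoly R n : R⟦X⟧) - PowerSeries.catalanSeriesX R := by
  rw [PowerSeries.X_pow_dvd_iff]
  rintro (_ | d) hd
  · simp [coeff_catalanPoly_zero, PowerSeries.catalanSeriesX]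
  · simp [coeff_catalanPoly_succ, PowerSeries.catalanSeriesX, PowerSeries.coeff_succ_X_mul,
      show d < n by omega]

theorem X_pow_dvd_coe_iff {p : R[X]} {n : ℕ} : (PowerSeries.X : R⟦X⟧) ^ n ∣ p ↔ X ^ n ∣ p := by
  simp only [PowerSeries.X_pow_dvd_iff, X_pow_dvd_iff, coeff_coe]

theorem eq_catalanPoly_of_X_pow_succ_dvd {P : R[X]} {n : ℕ} (hdeg : P.natDegree ≤ n)
    (hX : X ∣ P) (hP : X ^ (n + 1) ∣ P - X - P ^ 2) : P = catalanPoly R n := by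
  have hPG : PowerSeries.X ^ (n + 1) ∣ (P : R⟦X⟧) - PowerSeries.catalanSeriesX R := by
    refine pow_dvd_sub_of_pow_dvd_sub_sub_sq ?_ (dvd_mul_right _ _) ?_ ?_
    · simpa using _root_.map_dvd (coeToPowerSeries.ringHom (R := R)) hX
    · simpa using _root_.map_dvd (coeToPowerSeries.ringHom (R := R)) hP
    · rw [sub_sub, ← PowerSeries.catalanSeriesX_eq_X_add_sq, sub_self]
      exact dvd_zero _
  have hdvd : X ^ (n + 1) ∣ P - catalanPoly R n := by
    rw [← X_pow_dvd_coe_iff, coe_sub]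
    simpa using dvd_sub hPG (X_pow_succ_dvd_catalanPoly_sub_catalanSeriesX n)
  ext d
  rcases le_or_gt d n with hd | hd
  · rw [← sub_eq_zero, ← coeff_sub]
    exact X_pow_dvd_iff.mp hdvd d (by omega)
  · obtain ⟨d, rfl⟩ := Nat.exists_eq_add_of_lt hd
    rw [coeff_eq_zero_of_natDegree_lt (by omega), coeff_catalanPoly_succ, if_neg (by omega)]

theorem one_sub_C_mul_X_pow_char_pow {p : ℕ} [Fact p.Prime] (a : ZMod p) (m : ℕ) :
    (1 - C a * X : (ZMod p)[X]) ^ p ^ m = 1 - C a * X ^ p ^ m := by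
  rw [sub_pow_char_pow, one_pow, mul_pow, ← C_pow, ZMod.pow_card_pow]

theorem sq_one_sub_four_mul_X_pow_half {p : ℕ} [Fact p.Prime] (hodd : Odd p) (m : ℕ) :
    ((1 - 4 * X : (ZMod p)[X]) ^ ((p ^ m + 1) / 2)) ^ 2 = (1 - 4 * X) * (1 - 4 * X ^ p ^ m) := by
  rw [← pow_mul, Nat.div_mul_cancel hodd.pow.add_one.two_dvd, pow_succ', ← map_ofNat C 4,
    one_sub_C_mul_X_pow_char_pow]

end Polynomial

theorem stmt6 (p q m : ℕ) (hp : p.Prime) (hodd : Odd p) (hq : q = p ^ m) :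
    ∑ k ∈ Finset.range q, C ((catalan k : ZMod p)) * X ^ (k + 1) =
      C ((2 : ZMod p)⁻¹) * (1 - (1 - 4 * X) ^ ((q + 1) / 2)) - X ^ q := by
  have := Fact.mk hp
  have hq0 : q ≠ 0 := hq ▸ pow_ne_zero m hp.ne_zero
  have hu := sq_one_sub_four_mul_X_pow_half hodd m
  rw [← hq] at hu
  set u := (1 - 4 * X : (ZMod p)[X]) ^ ((q + 1) / 2)
  set h := C (2 : ZMod p)⁻¹
  have h2 : h * 2 = 1 := by
    rw [← map_ofNat C 2, ← C_mul, inv_mul_cancel₀ (ZMod.two_ne_zero_of_odd hodd), C_1]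
  refine (eq_catalanPoly_of_X_pow_succ_dvd ?_ ?_ ?_).symm
  · have hdeg : u.natDegree ≤ (q + 1) / 2 * 1 := natDegree_pow_le_of_le _ (by compute_degree!)
    have hh : h.natDegree = 0 := natDegree_C _
    compute_degree
    omega
  · simp [X_dvd_iff, coeff_zero_eq_eval_zero, u, h, hq0]
  · have hsplit : (h * (1 - u) - X ^ q) - X - (h * (1 - u) - X ^ q) ^ 2
        = X ^ q * (1 - u - 4 * X - X ^ q) := by
      linear_combination (-h ^ 2) * hu
        + (-(1 - u) * h + (2 * h + 1) * (X + X ^ q - 4 * X * X ^ q) + X ^ q * (1 - u)) * h2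
    rw [hsplit, pow_succ]
    exact mul_dvd_mul_left _ (by simp [X_dvd_iff, coeff_zero_eq_eval_zero, u, hq0])
end

section
/- For any prime p ≥ 5, sum over k from 0 to p-1 of C_k is congruent to (3/2)*(p/3) - 1/2 modulo p^2, where division by 2 denotes the inverse of 2 modulo p^2. -/
/-!
Put `Q = ∑_{i<p} (X+1)^{2i} X^{p-1-i}`, so that `(X² + X + 1) Q = (X+1)^{2p} - X^p` and the sum of
the first `p` Catalan numbers is `[X^{p-1}] Q - [X^{p-2}] Q`. As `p` is odd and prime to `3`,
`X² + X + 1` divides `G = (X+1)^p - 1 - X^p`, say `G = (X² + X + 1) H` with `deg H ≤ p - 3`; and `p`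
divides every coefficient of `G`, so `G² ≡ 0 mod p²`. Hence, modulo `p²`,
`(X² + X + 1) (Q - 2 (1 + X^p) H) = 1 + X^p + X^{2p}`, so below degree `p` the coefficients of
`Q - 2 (1 + X^p) H` are those of `1 / (1 + X + X²) = (1 - X) / (1 - X³)`, namely `1, -1, 0`
repeated, while `H` does not reach the degrees `p - 2` and `p - 1`.
-/

open Polynomial

variable {R : Type*} [CommRing R]

theorem pow_sq_add_pow_add_one_eq_zero {r : R} (hr : r ^ 2 + r + 1 = 0) {n : ℕ}
    (hn : ¬ 3 ∣ n) : (r ^ n) ^ 2 + r ^ n + 1 = 0 := by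
  have hr3 : r ^ 3 = 1 := by linear_combination (r - 1) * hr
  obtain ⟨q, rfl | rfl⟩ : ∃ q, n = 3 * q + 1 ∨ n = 3 * q + 2 := ⟨n / 3, by omega⟩
  · simpa [pow_add, pow_mul, hr3] using hr
  · simp only [pow_add, pow_mul, hr3, one_pow, one_mul]
    linear_combination hr + r * hr3

theorem add_one_pow_sub_one_sub_pow_eq_zero {r : R} (hr : r ^ 2 + r + 1 = 0) {n : ℕ}
    (hn2 : Odd n) (hn3 : ¬ 3 ∣ n) : (r + 1) ^ n - 1 - r ^ n = 0 := by
  have hneg : r + 1 = -r ^ 2 := by linear_combination hr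
  rw [hneg, hn2.neg_pow, ← pow_mul, mul_comm, pow_mul]
  linear_combination -pow_sq_add_pow_add_one_eq_zero hr hn3

theorem X_sq_add_X_add_one_dvd {n : ℕ} (hn2 : Odd n) (hn3 : ¬ 3 ∣ n) :
    (X ^ 2 + X + 1 : R[X]) ∣ (X + 1) ^ n - 1 - X ^ n := by
  rw [← AdjoinRoot.mk_eq_zero]
  have hr := AdjoinRoot.mk_self (f := (X ^ 2 + X + 1 : R[X]))
  simp only [map_add, map_sub, map_pow, map_one, AdjoinRoot.mk_X] at hr ⊢
  exact add_one_pow_sub_one_sub_pow_eq_zero hr hn2 hn3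

theorem coeff_X_add_one_pow_sub_one_sub_X_pow {n : ℕ} (hn : 0 < n) (k : ℕ) :
    ((X + 1) ^ n - 1 - X ^ n : R[X]).coeff k =
      if 0 < k ∧ k < n then (n.choose k : R) else 0 := by
  simp only [coeff_sub, coeff_X_add_one_pow, coeff_one, coeff_X_pow]
  rcases lt_trichotomy k n with hk | rfl | hk
  · rcases Nat.eq_zero_or_pos k with rfl | hk0
    · simp [hn.ne]
    · simp [hk, hk0, hk0.ne', hk.ne]
  · simp [hn.ne']
  · simp [Nat.choose_eq_zero_of_lt hk, hk.ne', (hn.trans hk).ne', hk.not_gt]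

theorem natDegree_X_add_one_pow_sub_one_sub_X_pow_le {n : ℕ} (hn : 0 < n) :
    ((X + 1) ^ n - 1 - X ^ n : R[X]).natDegree ≤ n - 1 := by
  rw [natDegree_le_iff_coeff_eq_zero]
  intro k hk
  rw [coeff_X_add_one_pow_sub_one_sub_X_pow hn, if_neg (by omega)]

theorem sq_X_add_one_pow_sub_one_sub_X_pow_eq_zero {p : ℕ} (hp : p.Prime)
    (hR : (p : R) ^ 2 = 0) : ((X + 1) ^ p - 1 - X ^ p : R[X]) ^ 2 = 0 := by
  obtain ⟨F, hF⟩ : C (p : R) ∣ (X + 1) ^ p - 1 - X ^ p := by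
    rw [C_dvd_iff_dvd_coeff]
    intro k
    rw [coeff_X_add_one_pow_sub_one_sub_X_pow hp.pos]
    split_ifs with hk
    · exact_mod_cast (hp.dvd_choose_self hk.1.ne' hk.2).natCast
    · exact dvd_zero _
  rw [hF, mul_pow, ← C_pow, hR, C_0, zero_mul]

theorem exists_X_add_one_pow_sub_eq_mul {n : ℕ} (hn2 : Odd n) (hn3 : ¬ 3 ∣ n) :
    ∃ H : R[X], (X + 1) ^ n - 1 - X ^ n = (X ^ 2 + X + 1) * H ∧ H.natDegree ≤ n - 3 := by
  nontriviality R
  have hmonic : (X ^ 2 + X + 1 : R[X]).Monic := by monicity!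
  refine ⟨((X + 1) ^ n - 1 - X ^ n) /ₘ (X ^ 2 + X + 1), ?_, ?_⟩
  · have hmod := (modByMonic_eq_zero_iff_dvd hmonic).2 (X_sq_add_X_add_one_dvd hn2 hn3)
    have hdiv := modByMonic_add_div ((X + 1) ^ n - 1 - X ^ n : R[X]) (X ^ 2 + X + 1)
    rw [hmod, zero_add] at hdiv
    exact hdiv.symm
  · have hdeg : (X ^ 2 + X + 1 : R[X]).natDegree = 2 := by compute_degree!
    have := natDegree_X_add_one_pow_sub_one_sub_X_pow_le (R := R) hn2.pos
    rw [natDegree_divByMonic _ hmonic, hdeg]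
    omega

def invCyclotomicThreeCoeff (k : ℕ) : ℤ :=
  if k % 3 = 0 then 1 else if k % 3 = 1 then -1 else 0

theorem invCyclotomicThreeCoeff_add_add (k : ℕ) :
    invCyclotomicThreeCoeff (k + 2) + invCyclotomicThreeCoeff (k + 1) +
      invCyclotomicThreeCoeff k = 0 := by
  unfold invCyclotomicThreeCoeff
  split_ifs <;> omega

theorem coeff_X_sq_add_X_add_one_mul (A : R[X]) (k : ℕ) :
    ((X ^ 2 + X + 1) * A).coeff (k + 2) = A.coeff (k + 2) + A.coeff (k + 1) + A.coeff k := by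
  simp only [add_mul, one_mul, coeff_add, coeff_X_pow_mul, coeff_X_mul]
  ring

theorem coeff_eq_invCyclotomicThreeCoeff {A : R[X]} {N : ℕ}
    (h : X ^ N ∣ (X ^ 2 + X + 1) * A - 1) {k : ℕ} (hk : k < N) :
    A.coeff k = invCyclotomicThreeCoeff k := by
  rw [X_pow_dvd_iff] at h
  induction k using Nat.strong_induction_on with
  | _ k ih =>
    have hc := h k hk
    rcases k with _ | _ | k
    · simpa [invCyclotomicThreeCoeff, sub_eq_zero] using hc
    · have hc1 : ((X ^ 2 + X + 1) * A - 1).coeff 1 = A.coeff 0 + A.coeff 1 := by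
        simp [add_mul, coeff_X_pow_mul', coeff_X_mul, coeff_one]
      rw [zero_add] at hc ⊢
      rw [hc1, ih 0 (by omega) (by omega), show invCyclotomicThreeCoeff 0 = 1 from rfl] at hc
      rw [show invCyclotomicThreeCoeff 1 = -1 from rfl]
      linear_combination hc
    · rw [coeff_sub, coeff_X_sq_add_X_add_one_mul, coeff_one, if_neg (by omega), sub_zero,
        ih k (by omega) (by omega), ih (k + 1) (by omega) (by omega)] at hc
      have hχ := congrArg (Int.cast (R := R)) (invCyclotomicThreeCoeff_add_add k)
      push_cast at hχ
      linear_combination hc - hχ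

theorem catalan_add_choose_eq_centralBinom (n : ℕ) :
    catalan n + (2 * n).choose (n + 1) = n.centralBinom := by
  have hcat := succ_mul_catalan_eq_centralBinom n
  have hchoose := Nat.choose_succ_right_eq (2 * n) n
  rw [show 2 * n - n = n by omega, ← Nat.centralBinom_eq_two_mul_choose] at hchoose
  apply Nat.eq_of_mul_eq_mul_left n.succ_pos
  nlinarith

noncomputable def binomGeomSum (R : Type*) [CommRing R] (n : ℕ) : R[X] :=
  ∑ i ∈ Finset.range n, (X + 1) ^ (2 * i) * X ^ (n - 1 - i)

theorem X_sq_add_X_add_one_mul_binomGeomSum (n : ℕ) :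
    (X ^ 2 + X + 1) * binomGeomSum R n = (X + 1) ^ (2 * n) - X ^ n := by
  have h := geom_sum₂_mul ((X + 1) ^ 2 : R[X]) X n
  simp only [← pow_mul] at h
  rw [binomGeomSum, ← h]
  ring

theorem coeff_binomGeomSum_sub {n : ℕ} (hn : 2 ≤ n) :
    (binomGeomSum R n).coeff (n - 1) - (binomGeomSum R n).coeff (n - 2) =
      ∑ k ∈ Finset.range n, (catalan k : R) := by
  simp only [binomGeomSum, finsetSum_coeff, ← Finset.sum_sub_distrib]
  refine Finset.sum_congr rfl fun i hi => ?_
  have hi := Finset.mem_range.1 hi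
  have hcat : (catalan i : R) = (2 * i).choose i - (2 * i).choose (i + 1) := by
    rw [← Nat.centralBinom_eq_two_mul_choose, ← catalan_add_choose_eq_centralBinom]
    push_cast; ring
  rw [hcat, coeff_mul_X_pow', coeff_mul_X_pow', if_pos (by omega),
    show n - 1 - (n - 1 - i) = i by omega, coeff_X_add_one_pow, coeff_X_add_one_pow]
  split_ifs with h
  · rw [show n - 2 - (n - 1 - i) = i - 1 by omega,
      Nat.choose_symm_of_eq_add (show 2 * i = i - 1 + (i + 1) by omega)]
  · simp [show i = 0 by omega]

theorem coeff_binomGeomSum_of_sq_eq_zero {p : ℕ} (hp : p.Prime) (hp5 : 5 ≤ p)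
    (hR : (p : R) ^ 2 = 0) {k : ℕ} (hk₁ : p - 2 ≤ k) (hk₂ : k < p) :
    (binomGeomSum R p).coeff k = invCyclotomicThreeCoeff k := by
  obtain ⟨H, hGH, hH⟩ := exists_X_add_one_pow_sub_eq_mul (R := R)
    (hp.odd_of_ne_two (by omega))
    (fun h => by have := hp.eq_one_or_self_of_dvd 3 h; omega)
  have hA : X ^ p ∣ (X ^ 2 + X + 1) * (binomGeomSum R p - 2 * (1 + X ^ p) * H) - 1 := by
    refine Dvd.intro (1 + X ^ p) ?_
    have hQ := X_sq_add_X_add_one_mul_binomGeomSum (R := R) p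
    rw [mul_comm 2 p, pow_mul] at hQ
    linear_combination -hQ - 2 * (1 + X ^ p) * hGH -
      sq_X_add_one_pow_sub_one_sub_X_pow_eq_zero hp hR
  have hH_coeff : ((1 + X ^ p) * H).coeff k = 0 := by
    rw [add_mul, one_mul, coeff_add, coeff_X_pow_mul', if_neg (by omega),
      coeff_eq_zero_of_natDegree_lt (by omega), add_zero]
  rw [← coeff_eq_invCyclotomicThreeCoeff hA hk₂, coeff_sub, mul_assoc, coeff_ofNat_mul, hH_coeff,
    mul_zero, sub_zero]

theorem sum_catalan_eq_of_sq_eq_zero {p : ℕ} (hp : p.Prime) (hp5 : 5 ≤ p)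
    (hR : (p : R) ^ 2 = 0) :
    ∑ k ∈ Finset.range p, (catalan k : R) =
      invCyclotomicThreeCoeff (p - 1) - invCyclotomicThreeCoeff (p - 2) := by
  rw [← coeff_binomGeomSum_sub (by omega), coeff_binomGeomSum_of_sq_eq_zero hp hp5 hR le_rfl
    (by omega), coeff_binomGeomSum_of_sq_eq_zero hp hp5 hR (by omega) (by omega)]

theorem two_mul_invCyclotomicThreeCoeff_sub {p : ℕ} (hp2 : 2 ≤ p) (hp3 : ¬ 3 ∣ p) :
    2 * (invCyclotomicThreeCoeff (p - 1) - invCyclotomicThreeCoeff (p - 2)) =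
      3 * legendreSym 3 p - 1 := by
  have hL : p % 3 = 1 ∧ legendreSym 3 p = 1 ∨ p % 3 = 2 ∧ legendreSym 3 p = -1 := by
    rw [legendreSym.mod]
    rcases (by omega : p % 3 = 1 ∨ p % 3 = 2) with h | h
    · exact .inl ⟨h, by rw [show (p : ℤ) % (3 : ℕ) = 1 by omega, legendreSym.at_one]⟩
    · exact .inr ⟨h, by rw [show (p : ℤ) % (3 : ℕ) = 2 by omega]; decide⟩
  unfold invCyclotomicThreeCoeff
  split_ifs <;> omega

theorem stmt8 (p : ℕ) (hp : p.Prime) (hp5 : 5 ≤ p) :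
    (↑(∑ k ∈ Finset.range p, catalan k) : ZMod (p ^ 2)) =
      3 * (2 : ZMod (p ^ 2))⁻¹ * (legendreSym 3 p : ZMod (p ^ 2)) - (2 : ZMod (p ^ 2))⁻¹ := by
  have hR : (p : ZMod (p ^ 2)) ^ 2 = 0 := by exact_mod_cast ZMod.natCast_self (p ^ 2)
  have h2 : (2 : ZMod (p ^ 2)) * 2⁻¹ = 1 := by
    exact_mod_cast ZMod.coe_mul_inv_eq_one 2
      (Nat.Coprime.pow_right 2 ((Nat.coprime_primes Nat.prime_two hp).2 (by omega)))
  have hp3 : ¬ 3 ∣ p := fun h => by have := hp.eq_one_or_self_of_dvd 3 h; omega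
  have hχ := congrArg (Int.cast : ℤ → ZMod (p ^ 2))
    (two_mul_invCyclotomicThreeCoeff_sub (by omega) hp3)
  push_cast at hχ
  rw [Nat.cast_sum, sum_catalan_eq_of_sq_eq_zero hp hp5 hR]
  linear_combination (2 : ZMod (p ^ 2))⁻¹ * hχ -
    ((invCyclotomicThreeCoeff (p - 1) : ZMod (p ^ 2)) - invCyclotomicThreeCoeff (p - 2)) * h2
end

section
/- For an odd prime p with n = (p-1)/2, and any i with 0 ≤ i ≤ n, the central binomial coefficient C(2i,i) is congruent to (-4)^i * C(n,i) modulo p. -/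
/-!
Over `ℚ` one has `C(2i, i) = (-4)^i * C(-1/2, i)`, and `n = (p - 1)/2` is `-1/2` modulo `p`.
Clearing denominators: once `2n = -1`, both `C(2i, i) * i!` and `(-4)^i * C(n, i) * i!` equal
`2^i * 1 * 3 * ⋯ * (2i - 1)`, and `i!` is invertible modulo `p` because `i < p`.
-/

open Finset Nat

theorem Nat.centralBinom_mul_factorial (i : ℕ) :
    centralBinom i * i ! = 2 ^ i * ∏ j ∈ range i, (2 * j + 1) := by
  induction i with
  | zero => simp
  | succ i ih =>
    calc centralBinom (i + 1) * (i + 1)! = (i + 1) * centralBinom (i + 1) * i ! := by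
          rw [factorial_succ]; ring
      _ = 2 * (2 * i + 1) * (centralBinom i * i !) := by rw [succ_mul_centralBinom_succ]; ring
      _ = 2 ^ (i + 1) * ∏ j ∈ range (i + 1), (2 * j + 1) := by rw [ih, prod_range_succ]; ring

theorem neg_two_pow_mul_prod_range_sub {R : Type*} [CommRing R] {x : R} (hx : 2 * x = -1)
    (i : ℕ) : (-2) ^ i * ∏ j ∈ range i, (x - j) = ∏ j ∈ range i, (2 * (j : R) + 1) := by
  have hpow := pow_card_mul_prod (s := range i) (b := (-2 : R)) (f := fun j => x - j)
  rw [card_range] at hpow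
  rw [hpow]
  exact prod_congr rfl fun j _ => by linear_combination -hx

theorem Nat.cast_centralBinom_mul_factorial {R : Type*} [CommRing R] {n i : ℕ} (hi : i ≤ n)
    (hn : 2 * (n : R) = -1) :
    (centralBinom i * i ! : R) = (-4) ^ i * n.choose i * i ! := by
  have hdesc : (n.descFactorial i : R) = ∏ j ∈ range i, ((n : R) - j) := by
    rw [descFactorial_eq_prod_range, cast_prod]
    exact prod_congr rfl fun j hj => cast_sub (by grind)
  calc (centralBinom i * i ! : R) = 2 ^ i * ∏ j ∈ range i, (2 * (j : R) + 1) := by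
        exact_mod_cast congrArg (Nat.cast : ℕ → R) (centralBinom_mul_factorial i)
    _ = 2 ^ i * ((-2) ^ i * ∏ j ∈ range i, ((n : R) - j)) := by
        rw [neg_two_pow_mul_prod_range_sub hn]
    _ = (-4) ^ i * n.descFactorial i := by
        rw [hdesc, show (-4 : R) = 2 * -2 by norm_num, mul_pow]; ring
    _ = (-4) ^ i * n.choose i * i ! := by
        rw [descFactorial_eq_factorial_mul_choose]; push_cast; ring

theorem stmt9 (p : ℕ) (hp : p.Prime) (hodd : Odd p) (i : ℕ) (hi : i ≤ (p - 1) / 2) :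
    ((Nat.choose (2 * i) i : ZMod p)) = (-4 : ZMod p) ^ i * Nat.choose ((p - 1) / 2) i := by
  have hodd_eq : 2 * ((p - 1) / 2) + 1 = p := by obtain ⟨k, rfl⟩ := hodd; omega
  have hn : 2 * (((p - 1) / 2 : ℕ) : ZMod p) = -1 := by
    have hcast := congrArg (Nat.cast : ℕ → ZMod p) hodd_eq
    push_cast [ZMod.natCast_self] at hcast
    linear_combination hcast
  have := Fact.mk hp
  have hfact : (i ! : ZMod p) ≠ 0 := by
    rw [Ne, ZMod.natCast_eq_zero_iff, hp.dvd_factorial]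
    omega
  refine mul_right_cancel₀ hfact ?_
  simpa [centralBinom_eq_two_mul_choose] using cast_centralBinom_mul_factorial hi hn
end

section
/- For any odd prime p, the Catalan number C_{p-1} is congruent to -1 modulo p. -/
/-! Writing `n = p - 1`, the identity `C_n = C(2n, n) - C(2n, n + 1)` reduces the claim to two
binomial congruences: `C(2n, n) = p C_n ≡ 0`, and `C(2n, n + 1) = C((p - 2) + p, p) ≡ 1` by
Lucas' theorem. -/

open Nat

lemma catalan_add_choose_two_mul_succ (n : ℕ) :
    catalan n + (2 * n).choose (n + 1) = centralBinom n := by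
  have hchoose : (2 * n).choose (n + 1) * (n + 1) = centralBinom n * n := by
    rw [choose_succ_right_eq, centralBinom]
    congr 1
    omega
  apply Nat.eq_of_mul_eq_mul_left (succ_pos n)
  rw [Nat.mul_add, succ_mul_catalan_eq_centralBinom, mul_comm (n + 1), hchoose, succ_eq_add_one]
  ring

lemma cast_choose_add_self_eq_one {p m : ℕ} [Fact p.Prime] (hm : m < p) :
    ((m + p).choose p : ZMod p) = 1 := by
  have hp : 0 < p := Fact.out (p := p.Prime) |>.pos
  have hlucas := Choose.choose_modEq_choose_mod_mul_choose_div_nat (n := m + p) (k := p) (p := p)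
  rw [add_mod_right, mod_eq_of_lt hm, mod_self, add_div_right _ hp, div_eq_of_lt hm,
    Nat.div_self hp, choose_zero_right, choose_self, one_mul] at hlucas
  exact_mod_cast (ZMod.natCast_eq_natCast_iff _ _ _).mpr hlucas

theorem stmt10_general (p : ℕ) (hp : p.Prime) :
    ((catalan (p - 1) : ZMod p)) = -1 := by
  have := Fact.mk hp
  obtain ⟨n, rfl⟩ : ∃ n, p = n + 1 := ⟨p - 1, (Nat.sub_add_cancel hp.one_le).symm⟩
  have hn : 1 ≤ n := by have := hp.two_le; omega
  rw [Nat.add_sub_cancel]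
  have hcentral : (centralBinom n : ZMod (n + 1)) = 0 := by
    rw [← succ_mul_catalan_eq_centralBinom, cast_mul, ZMod.natCast_self, zero_mul]
  have hchoose : ((2 * n).choose (n + 1) : ZMod (n + 1)) = 1 := by
    rw [show 2 * n = (n - 1) + (n + 1) by omega]
    exact cast_choose_add_self_eq_one (by omega)
  have hsum := congrArg (Nat.cast : ℕ → ZMod (n + 1)) (catalan_add_choose_two_mul_succ n)
  rw [cast_add, hcentral, hchoose] at hsum
  exact eq_neg_of_add_eq_zero_left hsum

theorem stmt10 (p : ℕ) (hp : p.Prime) (hodd : Odd p) :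
    ((catalan (p - 1) : ZMod p)) = -1 :=
  stmt10_general p hp
end

section
/- For any prime p ≥ 5 with n = (p-1)/2, sum over k from 0 to n of C_k * (-3/4)^(k+1) is congruent to -3/2 modulo p (interpreting fractions via inverses mod p). -/
/-!
Modulo `p = 2n + 1` we have `n = -1/2`, so `centralBinom k = (-4)^k * choose (-1/2) k` becomes
`(-4)^k * choose n k`, and hence `(n + 1) C_k = (-4)^k * choose (n + 1) (k + 1)` for `k ≤ n`.
The binomial theorem then sums the truncated Catalan series:
`-4 (n + 1) ∑_{k ≤ n} C_k x^(k+1) = (1 - 4x)^(n+1) - 1`.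
At `x = -3/4` the right side is `4^(n+1) - 1 = 3` by Fermat, and `n + 1 = 1/2`.
-/

open Finset

section OddCharacteristic

variable {R : Type*} [CommRing R] {n : ℕ} [CharP R (2 * n + 1)]

lemma two_mul_natCast_eq_neg_one : 2 * (n : R) = -1 := by
  have h := CharP.cast_eq_zero R (2 * n + 1)
  push_cast at h
  linear_combination h

variable [IsDomain R]

lemma natCast_add_one_ne_zero {k : ℕ} (hk : k ≤ n) : (k : R) + 1 ≠ 0 := by
  rw [← Nat.cast_succ, ne_eq, CharP.cast_eq_zero_iff R (2 * n + 1)]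
  intro hdvd
  obtain rfl : k = 2 * n := by have := Nat.le_of_dvd k.succ_pos hdvd; omega
  obtain rfl : n = 0 := by omega
  exact CharP.char_ne_one R (2 * 0 + 1) rfl

lemma centralBinom_eq_neg_four_pow_mul_choose_s11 {k : ℕ} (hk : k ≤ n) :
    (k.centralBinom : R) = (-4) ^ k * n.choose k := by
  induction k with
  | zero => simp
  | succ k ih =>
    apply mul_left_cancel₀ (natCast_add_one_ne_zero (R := R) (k.le_succ.trans hk))
    have hcb : ((k : R) + 1) * (k + 1).centralBinom = 2 * (2 * k + 1) * k.centralBinom := by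
      exact_mod_cast congrArg (Nat.cast (R := R)) k.succ_mul_centralBinom_succ
    have hch : (n.choose (k + 1) : R) * ((k : R) + 1) = n.choose k * (n - k) := by
      rw [← Nat.cast_sub (by omega : k ≤ n)]
      exact_mod_cast congrArg (Nat.cast (R := R)) (n.choose_succ_right_eq k)
    have hn : 2 * (n : R) = -1 := two_mul_natCast_eq_neg_one
    rw [hcb, ih (by omega), pow_succ]
    linear_combination (-4 : R) ^ k * (4 * hch + 2 * n.choose k * hn)

lemma natCast_add_one_mul_catalan {k : ℕ} (hk : k ≤ n) :
    ((n : R) + 1) * catalan k = (-4) ^ k * (n + 1).choose (k + 1) := by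
  apply mul_left_cancel₀ (natCast_add_one_ne_zero (R := R) hk)
  have hcat : ((k : R) + 1) * catalan k = k.centralBinom := by
    exact_mod_cast congrArg (Nat.cast (R := R)) (succ_mul_catalan_eq_centralBinom k)
  have hch : ((n : R) + 1) * n.choose k = (n + 1).choose (k + 1) * ((k : R) + 1) := by
    exact_mod_cast congrArg (Nat.cast (R := R)) (n.add_one_mul_choose_eq k)
  linear_combination ((n : R) + 1) * hcat + ((n : R) + 1) *
    centralBinom_eq_neg_four_pow_mul_choose_s11 (R := R) hk + (-4 : R) ^ k * hch

lemma neg_four_mul_sum_catalan_mul_pow (x : R) :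
    -4 * ((n + 1) * ∑ k ∈ range (n + 1), (catalan k : R) * x ^ (k + 1)) =
      (1 - 4 * x) ^ (n + 1) - 1 := by
  have hterm : ∀ k ∈ range (n + 1), -4 * (((n : R) + 1) * (catalan k * x ^ (k + 1))) =
      (-4 * x) ^ (k + 1) * (n + 1).choose (k + 1) := by
    intro k hk
    rw [← mul_assoc _ (catalan k : R),
      natCast_add_one_mul_catalan (Nat.lt_succ_iff.mp (mem_range.mp hk))]
    ring
  have hbin := add_pow (-4 * x) 1 (n + 1)
  rw [sum_range_succ'] at hbin
  simp only [one_pow, mul_one, pow_zero, Nat.choose_zero_right, Nat.cast_one] at hbin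
  rw [mul_sum, mul_sum, sum_congr rfl hterm]
  linear_combination -hbin

end OddCharacteristic

lemma ZMod.four_pow_eq_one {n : ℕ} [Fact (2 * n + 1).Prime] : (4 : ZMod (2 * n + 1)) ^ n = 1 :=
  calc (4 : ZMod (2 * n + 1)) ^ n = 2 ^ (2 * n + 1 - 1) := by
        rw [Nat.add_sub_cancel, pow_mul]; norm_num
    _ = 1 := ZMod.pow_card_sub_one_eq_one (Ring.two_ne_zero (by rw [ZMod.ringChar_zmod_n]; omega))

theorem stmt11 (p : ℕ) (hp : p.Prime) (hp5 : 5 ≤ p) :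
    ∑ k ∈ Finset.range ((p - 1) / 2 + 1), (catalan k : ZMod p) * (-3 * (4 : ZMod p)⁻¹) ^ (k + 1) =
      -(3 * (2 : ZMod p)⁻¹) := by
  obtain ⟨n, rfl⟩ := hp.odd_of_ne_two (by omega)
  have : Fact (2 * n + 1).Prime := ⟨hp⟩
  rw [show (2 * n + 1 - 1) / 2 = n by omega]
  have h2 : (2 : ZMod (2 * n + 1)) ≠ 0 := Ring.two_ne_zero (by rw [ZMod.ringChar_zmod_n]; omega)
  have h4 : (4 : ZMod (2 * n + 1)) ≠ 0 := by
    simpa [show (4 : ZMod (2 * n + 1)) = 2 * 2 by norm_num] using h2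
  have key := neg_four_mul_sum_catalan_mul_pow (R := ZMod (2 * n + 1)) (-3 * 4⁻¹)
  rw [show 1 - 4 * (-3 * 4⁻¹ : ZMod (2 * n + 1)) = 4 by field_simp; ring, pow_succ,
    ZMod.four_pow_eq_one, one_mul] at key
  set S := ∑ k ∈ range (n + 1), (catalan k : ZMod (2 * n + 1)) * (-3 * 4⁻¹) ^ (k + 1)
  linear_combination (-2⁻¹ : ZMod (2 * n + 1)) * key
    - 2 * 2⁻¹ * S * two_mul_natCast_eq_neg_one (R := ZMod (2 * n + 1)) (n := n)
    - S * mul_inv_cancel₀ h2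
end

section
/- For any prime p ≥ 5 with n = (p-1)/2, sum over k from 0 to n of C(2k,k)*(-3/4)^k is congruent to 1 modulo p (interpreting 1/4 via the inverse of 4 mod p). -/
open Finset

/-!
Modulo `p = 2n + 1` we have `n ≡ -1/2`, so `C(2k, k) = (-4)^k C(-1/2, k) ≡ (-4)^k C(n, k)` for
`k ≤ n`. The sum therefore becomes `∑ C(n, k) 3^k = 4^n = 2^(p-1)`, which is `1` by Fermat.
-/

theorem choose_two_mul_self_eq_neg_four_pow_mul_choose {p n : ℕ} [Fact p.Prime]
    (hn : 2 * n + 1 = p) {k : ℕ} (hk : k ≤ n) :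
    ((2 * k).choose k : ZMod p) = (-4) ^ k * n.choose k := by
  have hn4 : (4 : ZMod p) * n = -2 := by
    have : ((2 * n + 1 : ℕ) : ZMod p) = 0 := by rw [hn, ZMod.natCast_self]
    push_cast at this
    linear_combination 2 * this
  induction k with
  | zero => simp
  | succ k ih =>
    have hk1 : ((k + 1 : ℕ) : ZMod p) ≠ 0 := by
      rw [Ne, ZMod.natCast_eq_zero_iff]
      exact Nat.not_dvd_of_pos_of_lt k.succ_pos (by omega)
    have hcentral : ((k + 1 : ℕ) : ZMod p) * ((2 * (k + 1)).choose (k + 1) : ℕ)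
        = 2 * (2 * k + 1) * ((2 * k).choose k : ℕ) := by
      exact_mod_cast congrArg (Nat.cast : ℕ → ZMod p) (Nat.succ_mul_centralBinom_succ k)
    have hchoose : (n.choose (k + 1) : ZMod p) * (k + 1) = n.choose k * (n - k) := by
      have := congrArg (Nat.cast : ℕ → ZMod p) (Nat.choose_succ_right_eq n k)
      push_cast [Nat.cast_sub (by omega : k ≤ n)] at this
      exact this
    -- both sides satisfy `(k + 1) a (k + 1) = 2 (2k + 1) a k`, using `-4 (n - k) = 2 (2k + 1)`
    apply mul_left_cancel₀ hk1
    rw [hcentral, ih (by omega)]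
    push_cast
    linear_combination (-(-4 : ZMod p) ^ (k + 1)) * hchoose
      + (-4 : ZMod p) ^ k * n.choose k * hn4

theorem sum_range_choose_mul_three_pow {R : Type*} [CommSemiring R] (n : ℕ) :
    ∑ k ∈ range (n + 1), (n.choose k : R) * 3 ^ k = 4 ^ n := by
  rw [show (4 : R) = 3 + 1 by norm_num, add_pow]
  exact sum_congr rfl fun k _ => by ring

theorem stmt12_general (p : ℕ) (hp : p.Prime) :
    ∑ k ∈ Finset.range ((p - 1) / 2 + 1),
        (Nat.choose (2 * k) k : ZMod p) * (-3 * (4 : ZMod p)⁻¹) ^ k = 1 := by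
  have : Fact p.Prime := ⟨hp⟩
  obtain rfl | hodd := hp.eq_two_or_odd
  · decide
  have hp2 := hp.two_le
  set n := (p - 1) / 2
  have hn : 2 * n + 1 = p := by omega
  have h2 : (2 : ZMod p) ≠ 0 := by
    exact_mod_cast (ZMod.natCast_eq_zero_iff 2 p).not.mpr
      (Nat.not_dvd_of_pos_of_lt two_pos (by omega))
  have h4 : (4 : ZMod p) ≠ 0 := by simpa [← two_add_two_eq_four, ← two_mul] using mul_ne_zero h2 h2
  calc ∑ k ∈ range (n + 1), ((2 * k).choose k : ZMod p) * (-3 * (4 : ZMod p)⁻¹) ^ k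
      = ∑ k ∈ range (n + 1), (n.choose k : ZMod p) * 3 ^ k := by
        refine sum_congr rfl fun k hk => ?_
        rw [choose_two_mul_self_eq_neg_four_pow_mul_choose hn
          (Nat.lt_succ_iff.mp (mem_range.mp hk)),
          mul_comm ((-4 : ZMod p) ^ k), mul_assoc, ← mul_pow]
        congr 2
        linear_combination 3 * mul_inv_cancel₀ h4
    _ = 2 ^ (p - 1) := by
        rw [sum_range_choose_mul_three_pow, show p - 1 = 2 * n by omega, pow_mul]
        norm_num
    _ = 1 := ZMod.pow_card_sub_one_eq_one h2

theorem stmt12 (p : ℕ) (hp : p.Prime) (hp5 : 5 ≤ p) :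
    ∑ k ∈ Finset.range ((p - 1) / 2 + 1),
        (Nat.choose (2 * k) k : ZMod p) * (-3 * (4 : ZMod p)⁻¹) ^ k = 1 :=
  stmt12_general p hp
end

section
/- For an odd prime p with n = (p-1)/2, and integers i, j with 1 ≤ j ≤ n and i+j ≤ n, the super Catalan number S(i, j+n) = C(2i,i)*C(2j+2n,j+n)/C(i+j+n,i) is congruent to 0 modulo p. -/
/-!
The numerator's factor `C(2j+2n, j+n)` is divisible by `p`, because `j + n < p ≤ 2(j + n)`,
while the denominator `C(i+j+n, i)` is prime to `p`, because `i + j + n < p`. As super Catalan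
numbers are integers, i.e. `C(m+k, m) ∣ C(2m, m) C(2k, k)`, the factor `p` survives the division.
Integrality follows from Legendre's formula and `⌊a⌋ + ⌊b⌋ + ⌊a + b⌋ ≤ ⌊2a⌋ + ⌊2b⌋`.
-/

open Nat Finset

theorem Nat.div_add_div_add_add_div_le (a b c : ℕ) :
    a / c + b / c + (a + b) / c ≤ 2 * a / c + 2 * b / c := by
  obtain rfl | hc := c.eq_zero_or_pos
  · simp
  rw [two_mul, two_mul, Nat.add_div hc, Nat.add_div hc, Nat.add_div hc]
  have := a.mod_lt hc
  have := b.mod_lt hc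
  split_ifs <;> omega

theorem Nat.factorial_mul_factorial_mul_factorial_add_dvd (m k : ℕ) :
    m ! * k ! * (m + k)! ∣ (2 * m)! * (2 * k)! := by
  refine (factorization_prime_le_iff_dvd (by positivity) (by positivity)).mp fun p hp => ?_
  have legendre (x : ℕ) (hx : x ≤ 2 * m + 2 * k) :
      (x)!.factorization p = ∑ i ∈ Ico 1 (2 * m + 2 * k + 1), x / p ^ i :=
    factorization_factorial hp ((log_le_self p x).trans_lt (by omega))
  simp only [factorization_mul (factorial_ne_zero _) (factorial_ne_zero _),
    factorization_mul (mul_ne_zero (factorial_ne_zero _) (factorial_ne_zero _)) (factorial_ne_zero _),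
    Finsupp.add_apply]
  rw [legendre m (by omega), legendre k (by omega), legendre (m + k) (by omega),
    legendre (2 * m) (by omega), legendre (2 * k) (by omega), ← sum_add_distrib,
    ← sum_add_distrib, ← sum_add_distrib]
  exact sum_le_sum fun i _ => div_add_div_add_add_div_le m k (p ^ i)

theorem Nat.add_choose_dvd_centralBinom_mul_centralBinom (m k : ℕ) :
    (m + k).choose m ∣ centralBinom m * centralBinom k := by
  have hfact := factorial_mul_factorial_mul_factorial_add_dvd m k
  rw [← add_choose_mul_factorial_mul_factorial, two_mul, two_mul,
    ← add_choose_mul_factorial_mul_factorial m, ← add_choose_mul_factorial_mul_factorial k,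
    ← choose_symm_add] at hfact
  rw [centralBinom_eq_two_mul_choose, centralBinom_eq_two_mul_choose, two_mul, two_mul]
  refine (Nat.mul_dvd_mul_iff_right (by positivity : 0 < m ! * k ! * m ! * k !)).mp ?_
  convert hfact using 1 <;> ring

theorem stmt17_general (p : ℕ) (hp : p.Prime) (i j : ℕ)
    (hj1 : 1 ≤ j) (hij : i + j ≤ (p - 1) / 2) :
    (↑((Nat.choose (2 * i) i * Nat.choose (2 * j + 2 * ((p - 1) / 2)) (j + (p - 1) / 2)) /
          Nat.choose (i + j + (p - 1) / 2) i) : ZMod p) = 0 := by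
  set n := (p - 1) / 2
  have hp2 := hp.two_le
  have hnum : p ∣ (2 * j + 2 * n).choose (j + n) := hp.dvd_choose (by omega) (by omega) (by omega)
  have hden : p.Coprime ((i + j + n).choose i) := hp.coprime_choose_of_lt (by omega) (by omega)
  have hdvd : (i + j + n).choose i ∣ (2 * i).choose i * (2 * j + 2 * n).choose (j + n) := by
    have := add_choose_dvd_centralBinom_mul_centralBinom i (j + n)
    rwa [centralBinom_eq_two_mul_choose, centralBinom_eq_two_mul_choose, ← add_assoc,
      mul_add] at this
  rw [ZMod.natCast_eq_zero_iff]
  refine hden.dvd_of_dvd_mul_right ?_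
  rw [Nat.div_mul_cancel hdvd]
  exact dvd_mul_of_dvd_right hnum _

theorem stmt17 (p : ℕ) (hp : p.Prime) (hodd : Odd p) (i j : ℕ)
    (hj1 : 1 ≤ j) (hj : j ≤ (p - 1) / 2) (hij : i + j ≤ (p - 1) / 2) :
    (↑((Nat.choose (2 * i) i * Nat.choose (2 * j + 2 * ((p - 1) / 2)) (j + (p - 1) / 2)) /
          Nat.choose (i + j + (p - 1) / 2) i) : ZMod p) = 0 :=
  stmt17_general p hp i j hj1 hij
end
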